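/- Let N and k be positive integers and let q, a, c ∈ ℂ with 0 < |q| < 1 and |cq| < 1. Then ∑_{n=0}^∞ c^n · C(k+n−1, n) · ( (aq^n;q)_N − 1 ) = ∑_{n=1}^∞ (−a)^n · q^{n(n−1)/2} · (q^{N−n+1};q)_n / ( (q;q)_n · (1 − cq^n)^k ), where the series on the right terminates: its terms vanish for n > N since (q^{N−n+1};q)_n contains the factor 1 − q^0 = 0. -/

import Mathlib

/-- Finite q-Pochhammer symbol `(x;q)_n = ∏_{k=0}^{n-1} (1 - x q^k)`. -/
noncomputable def qPoch (x q : ℂ) (n : ℕ) : ℂ := ∏ k ∈ Finset.range n, (1 - x * q ^ k)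

/-- Infinite q-Pochhammer symbol `(x;q)_∞ = ∏_{k=0}^{∞} (1 - x q^k)`. -/
noncomputable def qPochInf (x q : ℂ) : ℂ := ∏' k : ℕ, (1 - x * q ^ k)

/-- Gaussian binomial coefficient `[n k]_q`, equal to `0` for `k > n`. -/
noncomputable def gbinom (q : ℂ) (n k : ℕ) : ℂ :=
  if k ≤ n then qPoch q q n / (qPoch q q k * qPoch q q (n - k)) else 0


/-!
By the q-binomial theorem, `(a q^n; q)_N - 1 = ∑_{1 ≤ m ≤ N} [x^m](x;q)_N · a^m (q^m)^n`, so after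
exchanging this finite sum with the sum over `n`, the left side becomes a combination of the
negative binomial series `∑_n C(k+n-1, n) (c q^m)^n = (1 - c q^m)^{-k}`. The term for `m` is the
term `n = m - 1` of the right side.
-/

open Finset

theorem hasSum_choose_mul_pow_inv_one_sub_pow {𝕜 : Type*} [NormedDivisionRing 𝕜] (k : ℕ) {z : 𝕜}
    (hz : ‖z‖ < 1) :
    HasSum (fun n ↦ ((k + n - 1).choose n : 𝕜) * z ^ n) ((1 - z) ^ k)⁻¹ := by
  cases k with
  | zero =>
    convert hasSum_single (f := fun n ↦ ((0 + n - 1).choose n : 𝕜) * z ^ n) 0 fun n hn ↦ ?_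
    · simp
    · simp [Nat.choose_eq_zero_of_lt (show n - 1 < n by omega)]
  | succ k =>
    convert hasSum_choose_mul_geometric_of_norm_lt_one k hz using 1
    · funext n
      rw [add_right_comm, Nat.add_sub_cancel, add_comm, Nat.choose_symm_add]
    · rw [one_div]

theorem qPoch_succ (x q : ℂ) (n : ℕ) : qPoch x q (n + 1) = qPoch x q n * (1 - x * q ^ n) :=
  prod_range_succ _ _

theorem qPoch_succ' (x q : ℂ) (n : ℕ) : qPoch x q (n + 1) = (1 - x) * qPoch (x * q) q n := by
  simp only [qPoch, prod_range_succ', pow_succ', mul_assoc, pow_zero, mul_one]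
  ring

theorem qPoch_zpow_eq_zero {q : ℂ} (hq : q ≠ 0) {e : ℤ} {n : ℕ} (he : e ≤ 0) (hn : -e < n) :
    qPoch (q ^ e) q n = 0 := by
  refine prod_eq_zero (i := (-e).toNat) (mem_range.mpr (by omega)) ?_
  rw [← zpow_natCast, ← zpow_add₀ hq, show e + ((-e).toNat : ℤ) = 0 by omega, zpow_zero, sub_self]

theorem qPoch_self_ne_zero {q : ℂ} (hq : ‖q‖ < 1) (n : ℕ) : qPoch q q n ≠ 0 := by
  refine prod_ne_zero_iff.mpr fun j _ h ↦ ?_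
  have hlt : ‖q ^ (j + 1)‖ < 1 := by
    rw [norm_pow]
    exact pow_lt_one₀ (norm_nonneg q) hq (by omega)
  rw [pow_succ', ← sub_eq_zero.mp h, norm_one] at hlt
  exact hlt.false

/-- `(-1)^m q^{m(m-1)/2} [N m]_q`, with `(q^{N-m+1};q)_m` in place of `(q;q)_N / (q;q)_{N-m}` so
that it vanishes for `m > N` without a case split. -/
noncomputable def qBinomCoeff (q : ℂ) (N m : ℕ) : ℂ :=
  (-1) ^ m * q ^ (m * (m - 1) / 2) * qPoch (q ^ ((N : ℤ) - m + 1)) q m / qPoch q q m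

theorem qBinomCoeff_zero (q : ℂ) (N : ℕ) : qBinomCoeff q N 0 = 1 := by
  simp [qBinomCoeff, qPoch]

theorem qBinomCoeff_succ_self {q : ℂ} (hq : q ≠ 0) (N : ℕ) : qBinomCoeff q N (N + 1) = 0 := by
  rw [qBinomCoeff, qPoch_zpow_eq_zero hq (by push_cast; omega) (by push_cast; omega)]
  simp

theorem qBinomCoeff_succ_succ {q : ℂ} (hq : q ≠ 0) {m : ℕ} (hm : qPoch q q (m + 1) ≠ 0) (N : ℕ) :
    qBinomCoeff q (N + 1) (m + 1) = qBinomCoeff q N (m + 1) - q ^ N * qBinomCoeff q N m := by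
  have hqm : q ^ ((N : ℤ) - m) * q ^ m = q ^ N := by
    rw [← zpow_natCast q m, ← zpow_add₀ hq, sub_add_cancel, zpow_natCast]
  have hP₁ : qPoch (q ^ (((N + 1 : ℕ) : ℤ) - (m + 1 : ℕ) + 1)) q (m + 1) =
      qPoch (q ^ ((N : ℤ) - m + 1)) q m * (1 - q ^ ((N : ℤ) - m) * q ^ m * q) := by
    rw [qPoch_succ, show ((N + 1 : ℕ) : ℤ) - (m + 1 : ℕ) + 1 = (N : ℤ) - m + 1 by push_cast; ring,
      zpow_add_one₀ hq]
    ring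
  have hP₂ : qPoch (q ^ ((N : ℤ) - (m + 1 : ℕ) + 1)) q (m + 1) =
      (1 - q ^ ((N : ℤ) - m)) * qPoch (q ^ ((N : ℤ) - m + 1)) q m := by
    rw [show (N : ℤ) - (m + 1 : ℕ) + 1 = (N : ℤ) - m by push_cast; ring, qPoch_succ',
      zpow_add_one₀ hq]
  rw [qPoch_succ] at hm
  have hm₁ := left_ne_zero_of_mul hm
  have hm₂ := right_ne_zero_of_mul hm
  rw [qBinomCoeff, qBinomCoeff, qBinomCoeff, hP₁, hP₂, Nat.triangle_succ, qPoch_succ q q m, ← hqm]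
  generalize q ^ ((N : ℤ) - m) = u
  generalize qPoch (q ^ ((N : ℤ) - m + 1)) q m = P
  generalize he : 1 - q * q ^ m = e at hm₂
  have hqe : q ^ m * q = 1 - e := by rw [← he]; ring
  field_simp
  linear_combination q ^ m * q ^ (m * (m - 1) / 2) * P * u * (-1) ^ m * hqe

theorem qPoch_eq_sum_qBinomCoeff {q : ℂ} (hq : q ≠ 0) (hqq : ∀ m, qPoch q q m ≠ 0) (x : ℂ)
    (N : ℕ) : qPoch x q N = ∑ m ∈ range (N + 1), qBinomCoeff q N m * x ^ m := by
  induction N with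
  | zero => simp [qPoch, qBinomCoeff_zero]
  | succ N ih =>
    have hshift : ∑ m ∈ range (N + 1), qBinomCoeff q N (m + 1) * x ^ (m + 1) =
        ∑ m ∈ range (N + 1), qBinomCoeff q N m * x ^ m - 1 := by
      rw [sum_range_succ, qBinomCoeff_succ_self hq, sum_range_succ' _ N, qBinomCoeff_zero]
      ring
    have hmul : ∑ m ∈ range (N + 1), q ^ N * qBinomCoeff q N m * x ^ (m + 1) =
        x * q ^ N * ∑ m ∈ range (N + 1), qBinomCoeff q N m * x ^ m := by
      rw [mul_sum]
      exact sum_congr rfl fun m _ ↦ by ring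
    rw [qPoch_succ, ih, sum_range_succ' (fun m ↦ qBinomCoeff q (N + 1) m * x ^ m),
      qBinomCoeff_zero]
    simp only [qBinomCoeff_succ_succ hq (hqq _), sub_mul, sum_sub_distrib, hshift, hmul]
    ring

theorem qPoch_sub_one_eq_sum {q : ℂ} (hq : q ≠ 0) (hqq : ∀ m, qPoch q q m ≠ 0) (x : ℂ) (N : ℕ) :
    qPoch x q N - 1 = ∑ m ∈ range N, qBinomCoeff q N (m + 1) * x ^ (m + 1) := by
  rw [qPoch_eq_sum_qBinomCoeff hq hqq, sum_range_succ', qBinomCoeff_zero]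
  ring

theorem hasSum_choose_mul_qPoch_sub_one {q c : ℂ} (hq : q ≠ 0) (hq1 : ‖q‖ < 1)
    (hcq : ‖c * q‖ < 1) (N k : ℕ) (a : ℂ) :
    HasSum (fun n ↦ c ^ n * ((k + n - 1).choose n : ℂ) * (qPoch (a * q ^ n) q N - 1))
      (∑ m ∈ range N, qBinomCoeff q N (m + 1) * a ^ (m + 1) * ((1 - c * q ^ (m + 1)) ^ k)⁻¹) := by
  have hnorm (m : ℕ) : ‖c * q ^ (m + 1)‖ < 1 := by
    rw [pow_succ', ← mul_assoc, norm_mul, norm_pow]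
    exact (mul_le_of_le_one_right (norm_nonneg _) (pow_le_one₀ (norm_nonneg q) hq1.le)).trans_lt hcq
  have hterm (n : ℕ) : c ^ n * ((k + n - 1).choose n : ℂ) * (qPoch (a * q ^ n) q N - 1) =
      ∑ m ∈ range N, qBinomCoeff q N (m + 1) * a ^ (m + 1) *
        (((k + n - 1).choose n : ℂ) * (c * q ^ (m + 1)) ^ n) := by
    rw [qPoch_sub_one_eq_sum hq (qPoch_self_ne_zero hq1), mul_sum]
    refine sum_congr rfl fun m _ ↦ ?_
    ring
  simp only [hterm]
  exact hasSum_sum fun m _ ↦ (hasSum_choose_mul_pow_inv_one_sub_pow k (hnorm m)).mul_left _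

theorem stmt19_general (N k : ℕ) (q a c : ℂ)
    (hq0 : 0 < ‖q‖) (hq1 : ‖q‖ < 1) (hcq : ‖c * q‖ < 1) :
    ∑' n : ℕ, c ^ n * (Nat.choose (k + n - 1) n : ℂ) * (qPoch (a * q ^ n) q N - 1)
      = ∑' n : ℕ, (-a) ^ (n + 1) * q ^ ((n + 1) * n / 2) *
          qPoch (q ^ ((N : ℤ) - (n : ℤ))) q (n + 1) /
          (qPoch q q (n + 1) * (1 - c * q ^ (n + 1)) ^ k) := by
  have hq : q ≠ 0 := norm_pos_iff.mp hq0
  rw [(hasSum_choose_mul_qPoch_sub_one hq hq1 hcq N k a).tsum_eq, tsum_eq_sum (s := range N)]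
  · refine sum_congr rfl fun n _ ↦ ?_
    rw [qBinomCoeff, show (N : ℤ) - (n + 1 : ℕ) + 1 = N - n by push_cast; ring, Nat.add_sub_cancel,
      neg_pow]
    ring
  · intro n hn
    rw [qPoch_zpow_eq_zero hq (by rw [mem_range] at hn; omega) (by omega), mul_zero, zero_div]

theorem stmt19 (N k : ℕ) (hN : 1 ≤ N) (hk : 1 ≤ k) (q a c : ℂ)
    (hq0 : 0 < ‖q‖) (hq1 : ‖q‖ < 1) (hcq : ‖c * q‖ < 1) :
    ∑' n : ℕ, c ^ n * (Nat.choose (k + n - 1) n : ℂ) * (qPoch (a * q ^ n) q N - 1)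
      = ∑' n : ℕ, (-a) ^ (n + 1) * q ^ ((n + 1) * n / 2) *
          qPoch (q ^ ((N : ℤ) - (n : ℤ))) q (n + 1) /
          (qPoch q q (n + 1) * (1 - c * q ^ (n + 1)) ^ k) :=
  stmt19_general N k q a c hq0 hq1 hcq
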